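/- For every vertex v of a graph E, the L-class L_v is maximal in the set of L-classes of G(E) under ≤_L, and the R-class R_v is maximal under ≤_R. -/

import Mathlib

universe u

/-- A directed graph: vertices, edges, source and range maps. -/
structure DGraph : Type (u + 1) where
  V : Type u
  Ed : Type u
  src : Ed → V
  rng : Ed → V

/-- The end vertex of a list of edges started at `v` (ignoring composability). -/
def DGraph.ranAux (G : DGraph) : G.V → List G.Ed → G.V
  | v, [] => v
  | _, e :: es => DGraph.ranAux G (G.rng e) es

/-- The edges `l` form a composable path starting at `v`. -/
def DGraph.Chain (G : DGraph) : G.V → List G.Ed → Prop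
  | _, [] => True
  | v, e :: es => G.src e = v ∧ DGraph.Chain G (G.rng e) es

theorem DGraph.ranAux_append (G : DGraph) (v : G.V) (l1 l2 : List G.Ed) :
    G.ranAux v (l1 ++ l2) = G.ranAux (G.ranAux v l1) l2 := by
  induction l1 generalizing v with
  | nil => rfl
  | cons e es ih => exact ih (G.rng e)

theorem DGraph.chain_append (G : DGraph) {v : G.V} {l1 l2 : List G.Ed}
    (h1 : G.Chain v l1) (h2 : G.Chain (G.ranAux v l1) l2) : G.Chain v (l1 ++ l2) := by
  induction l1 generalizing v with
  | nil => exact h2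
  | cons e es ih => exact ⟨h1.1, ih h1.2 h2⟩

theorem DGraph.chain_append_right (G : DGraph) {v : G.V} {l1 l2 : List G.Ed}
    (h : G.Chain v (l1 ++ l2)) : G.Chain (G.ranAux v l1) l2 := by
  induction l1 generalizing v with
  | nil => exact h
  | cons e es ih => exact ih h.2

/-- A (finite, directed) path in the graph `G`: a start vertex together
with a composable list of edges. Vertices are the paths of length `0`. -/
structure GPath (G : DGraph.{u}) : Type u where
  start : G.V
  edges : List G.Ed
  chain : G.Chain start edges

namespace GPath

variable {G : DGraph}

/-- The range (end vertex) of a path. -/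
def ran (p : GPath G) : G.V := G.ranAux p.start p.edges

/-- The path of length zero at a vertex. -/
def ofVertex (G : DGraph) (v : G.V) : GPath G := ⟨v, [], trivial⟩

/-- The path of length one given by an edge. -/
def ofEdge (G : DGraph) (e : G.Ed) : GPath G := ⟨G.src e, [e], ⟨rfl, trivial⟩⟩

@[simp] theorem ofVertex_ran (G : DGraph) (v : G.V) : (ofVertex G v).ran = v := rfl

@[simp] theorem ofEdge_ran (G : DGraph) (e : G.Ed) : (ofEdge G e).ran = G.rng e := rfl

/-- Concatenation of composable paths. -/
def append (p q : GPath G) (h : p.ran = q.start) : GPath G :=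
  ⟨p.start, p.edges ++ q.edges,
    G.chain_append p.chain (by
      show G.Chain (G.ranAux p.start p.edges) q.edges
      have : G.ranAux p.start p.edges = q.start := h
      rw [this]; exact q.chain)⟩

@[simp] theorem append_ran (p q : GPath G) (h : p.ran = q.start) :
    (p.append q h).ran = q.ran := by
  show G.ranAux p.start (p.edges ++ q.edges) = q.ran
  rw [G.ranAux_append]
  have : G.ranAux p.start p.edges = q.start := h
  rw [this]; rfl

/-- `y` is an initial segment of the path `p`. -/
def IsPrefixOf (y p : GPath G) : Prop := y.start = p.start ∧ y.edges <+: p.edges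

/-- The remainder `t` of `p` after its initial segment `y`, so that `p = y ++ t`. -/
def remainder (y p : GPath G) (h : y.IsPrefixOf p) : GPath G :=
  ⟨y.ran, p.edges.drop y.edges.length, by
    obtain ⟨l2, hl⟩ := h.2
    rw [← hl, List.drop_left]
    show G.Chain (G.ranAux y.start y.edges) l2
    rw [h.1]
    exact G.chain_append_right (v := p.start) (l1 := y.edges) (l2 := l2)
      (by rw [hl]; exact p.chain)⟩

@[simp] theorem remainder_ran (y p : GPath G) (h : y.IsPrefixOf p) :
    (y.remainder p h).ran = p.ran := by
  obtain ⟨l2, hl⟩ := h.2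
  show G.ranAux y.ran (p.edges.drop y.edges.length) = p.ran
  rw [← hl, List.drop_left]
  show G.ranAux (G.ranAux y.start y.edges) l2 = p.ran
  rw [h.1, ← G.ranAux_append, hl]
  rfl

end GPath

/-- The graph inverse semigroup of `G` (in normal form): its elements are zero together
with the elements `x * y⁻¹` for paths `x`, `y` with the same range. -/
inductive GIS (G : DGraph.{u}) : Type u where
  | zero : GIS G
  | mk (x y : GPath G) (h : x.ran = y.ran) : GIS G

instance (G : DGraph) : Zero (GIS G) := ⟨GIS.zero⟩

open scoped Classical in
/-- Multiplication in the graph inverse semigroup. -/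
noncomputable def GIS.gmul {G : DGraph} : GIS G → GIS G → GIS G
  | GIS.zero, _ => GIS.zero
  | GIS.mk _ _ _, GIS.zero => GIS.zero
  | GIS.mk x y hxy, GIS.mk p q hpq =>
    if h1 : y.IsPrefixOf p then
      GIS.mk (x.append (y.remainder p h1) hxy) q
        ((GPath.append_ran x _ hxy).trans ((GPath.remainder_ran y p h1).trans hpq))
    else if h2 : p.IsPrefixOf y then
      GIS.mk x (q.append (p.remainder y h2) hpq.symm)
        (hxy.trans ((GPath.append_ran q _ hpq.symm).trans (GPath.remainder_ran p y h2)).symm)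
    else GIS.zero

noncomputable instance (G : DGraph) : Mul (GIS G) := ⟨GIS.gmul⟩

/-- The element of `GIS G` corresponding to a vertex `v` (i.e. `v = v * v⁻¹`). -/
def vertexEl (G : DGraph) (v : G.V) : GIS G :=
  GIS.mk (GPath.ofVertex G v) (GPath.ofVertex G v) rfl

/-- The element of `GIS G` corresponding to an edge `e` (i.e. `e = e * r(e)⁻¹`). -/
def edgeEl (G : DGraph) (e : G.Ed) : GIS G :=
  GIS.mk (GPath.ofEdge G e) (GPath.ofVertex G (G.rng e)) rfl

/-- The inverse operation on `GIS G`: `(x y⁻¹)⁻¹ = y x⁻¹`. -/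
def GIS.inv {G : DGraph} : GIS G → GIS G
  | GIS.zero => GIS.zero
  | GIS.mk x y h => GIS.mk y x h.symm

/-- `a` lies in the principal left ideal generated by `b` (`S¹a ⊆ S¹b`). -/
def GreenLeL {G : DGraph} (a b : GIS G) : Prop := a = b ∨ ∃ c, a = c * b

/-- `a` lies in the principal right ideal generated by `b` (`aS¹ ⊆ bS¹`). -/
def GreenLeR {G : DGraph} (a b : GIS G) : Prop := a = b ∨ ∃ c, a = b * c

/-- `a` lies in the principal two-sided ideal generated by `b` (`S¹aS¹ ⊆ S¹bS¹`). -/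
def GreenLeJ {G : DGraph} (a b : GIS G) : Prop :=
  a = b ∨ (∃ c, a = c * b) ∨ (∃ c, a = b * c) ∨ (∃ c d, a = c * b * d)

/-- Green's `L`-relation. -/
def GreenEqL {G : DGraph} (a b : GIS G) : Prop := GreenLeL a b ∧ GreenLeL b a

/-- Green's `R`-relation. -/
def GreenEqR {G : DGraph} (a b : GIS G) : Prop := GreenLeR a b ∧ GreenLeR b a

/-- Green's `J`-relation. -/
def GreenEqJ {G : DGraph} (a b : GIS G) : Prop := GreenLeJ a b ∧ GreenLeJ b a

/-- There is a (possibly trivial) directed path from `v` to `w` in `G`. -/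
def GConnected (G : DGraph) (v w : G.V) : Prop := ∃ t : GPath G, t.start = v ∧ t.ran = w

/-- `I` is a (two-sided) ideal of `GIS G`. -/
def GISIdeal {G : DGraph} (I : Set (GIS G)) : Prop :=
  ∀ a ∈ I, ∀ c : GIS G, a * c ∈ I ∧ c * a ∈ I

/-- `R` is the Rees congruence of some ideal `I`, i.e. `R = (I × I) ∪ Δ`. -/
def IsReesCon {G : DGraph} (R : Con (GIS G)) : Prop :=
  ∃ I : Set (GIS G), GISIdeal I ∧ ∀ a b : GIS G, R a b ↔ (a ∈ I ∧ b ∈ I) ∨ a = b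

/-- The only congruences on `GIS G` are the universal one and the diagonal. -/
def CongFree (G : DGraph) : Prop :=
  ∀ R : Con (GIS G), (∀ a b : GIS G, R a b) ∨ (∀ a b : GIS G, R a b ↔ a = b)

/-- The natural partial order on the inverse semigroup `GIS G`:
`a ≤ b` iff `a = ε * b` for some idempotent `ε`. -/
def natLe {G : DGraph} (a b : GIS G) : Prop := ∃ ε : GIS G, ε * ε = ε ∧ a = ε * b

/-- The graph obtained from `G` by deleting the vertices in `S` and all
edges incident to them. -/
def DGraph.delete (G : DGraph) (S : Set G.V) : DGraph where
  V := {v : G.V // v ∉ S}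
  Ed := {e : G.Ed // G.src e ∉ S ∧ G.rng e ∉ S}
  src e := ⟨G.src e.1, e.2.1⟩
  rng e := ⟨G.rng e.1, e.2.2⟩

/-- The graph with a single vertex and `n` loops; its graph inverse semigroup
is the polycyclic monoid `Pₙ`. -/
def polyGraph (n : ℕ) : DGraph :=
  ⟨PUnit, Fin n, fun _ => PUnit.unit, fun _ => PUnit.unit⟩

/-! Multiplying `p q⁻¹` on the left only cancels against `p`, so in `c * (p q⁻¹) = x' y'⁻¹`
the path `y'` extends `q`. Hence `v = c * a` forces `a = p v⁻¹`, and then `a = a * v`, i.e.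
`L_a ≥ L_v` collapses to `L_a ≤ L_v`. The `R` case is the mirror image. -/

namespace GPath

variable {G : DGraph}

theorem ext {p q : GPath G} (hs : p.start = q.start) (he : p.edges = q.edges) : p = q := by
  cases p; cases q; cases hs; cases he; rfl

theorem isPrefixOf_refl (p : GPath G) : p.IsPrefixOf p := ⟨rfl, List.prefix_refl _⟩

theorem isPrefixOf_append (p q : GPath G) (h : p.ran = q.start) : p.IsPrefixOf (p.append q h) :=
  ⟨rfl, List.prefix_append _ _⟩

theorem eq_ofVertex_of_isPrefixOf {q : GPath G} {v : G.V} (h : q.IsPrefixOf (ofVertex G v)) :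
    q = ofVertex G v :=
  GPath.ext h.1 (List.prefix_nil.mp h.2)

theorem append_eq_self_of_edges_eq_nil (p t : GPath G) (h : p.ran = t.start)
    (ht : t.edges = []) : p.append t h = p :=
  GPath.ext rfl (by simp [append, ht])

end GPath

namespace GIS

variable {G : DGraph}

open scoped Classical in
theorem mk_mul_mk (x y p q : GPath G) (hxy : x.ran = y.ran) (hpq : p.ran = q.ran) :
    mk x y hxy * mk p q hpq =
      if h1 : y.IsPrefixOf p then
        mk (x.append (y.remainder p h1) hxy) q
          ((GPath.append_ran x _ hxy).trans ((GPath.remainder_ran y p h1).trans hpq))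
      else if h2 : p.IsPrefixOf y then
        mk x (q.append (p.remainder y h2) hpq.symm)
          (hxy.trans ((GPath.append_ran q _ hpq.symm).trans (GPath.remainder_ran p y h2)).symm)
      else zero :=
  rfl

theorem mul_zero (a : GIS G) : a * zero = zero := by
  cases a <;> rfl

theorem mk_mul_vertexEl (x : GPath G) (v : G.V) (h : x.ran = (GPath.ofVertex G v).ran) :
    mk x (GPath.ofVertex G v) h * vertexEl G v = mk x (GPath.ofVertex G v) h := by
  rw [vertexEl, mk_mul_mk, dif_pos (GPath.isPrefixOf_refl _)]
  congr 1
  exact GPath.append_eq_self_of_edges_eq_nil _ _ _ rfl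

theorem vertexEl_mul_mk (y : GPath G) (v : G.V) (h : (GPath.ofVertex G v).ran = y.ran) :
    vertexEl G v * mk (GPath.ofVertex G v) y h = mk (GPath.ofVertex G v) y h := by
  rw [vertexEl, mk_mul_mk, dif_pos (GPath.isPrefixOf_refl _)]
  congr 1

theorem exists_mk_isPrefixOf_right_of_mul_eq_mk
    {c a : GIS G} {x' y' : GPath G} {h' : x'.ran = y'.ran}
    (H : c * a = mk x' y' h') : ∃ p q h, a = mk p q h ∧ q.IsPrefixOf y' := by
  cases a with
  | zero => rw [mul_zero] at H; cases H
  | mk p q hpq =>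
    refine ⟨p, q, hpq, rfl, ?_⟩
    cases c with
    | zero => cases H
    | mk x y hxy =>
      rw [mk_mul_mk] at H
      split_ifs at H
      · cases H; exact GPath.isPrefixOf_refl _
      · cases H; exact GPath.isPrefixOf_append _ _ _

theorem exists_mk_isPrefixOf_left_of_mul_eq_mk
    {a c : GIS G} {x' y' : GPath G} {h' : x'.ran = y'.ran}
    (H : a * c = mk x' y' h') : ∃ p q h, a = mk p q h ∧ p.IsPrefixOf x' := by
  cases a with
  | zero => cases H
  | mk p q hpq =>
    refine ⟨p, q, hpq, rfl, ?_⟩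
    cases c with
    | zero => cases H
    | mk x y hxy =>
      rw [mk_mul_mk] at H
      split_ifs at H
      · cases H; exact GPath.isPrefixOf_append _ _ _
      · cases H; exact GPath.isPrefixOf_refl _

theorem eq_mul_vertexEl_of_vertexEl_eq_mul {c a : GIS G} {v : G.V}
    (H : vertexEl G v = c * a) : a = a * vertexEl G v := by
  obtain ⟨p, q, hpq, rfl, hq⟩ := exists_mk_isPrefixOf_right_of_mul_eq_mk H.symm
  obtain rfl := GPath.eq_ofVertex_of_isPrefixOf hq
  exact (mk_mul_vertexEl p v hpq).symm

theorem eq_vertexEl_mul_of_vertexEl_eq_mul {a c : GIS G} {v : G.V}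
    (H : vertexEl G v = a * c) : a = vertexEl G v * a := by
  obtain ⟨p, q, hpq, rfl, hp⟩ := exists_mk_isPrefixOf_left_of_mul_eq_mk H.symm
  obtain rfl := GPath.eq_ofVertex_of_isPrefixOf hp
  exact (vertexEl_mul_mk q v hpq).symm

end GIS

/-- For every vertex `v`, the class `L_v` is maximal among `L`-classes of
`G(E)` under `≤_L`, and `R_v` is maximal among `R`-classes under `≤_R`. -/
theorem stmt8 (G : DGraph) (v : G.V) :
    (∀ a : GIS G, GreenLeL (vertexEl G v) a → GreenLeL a (vertexEl G v)) ∧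
    (∀ a : GIS G, GreenLeR (vertexEl G v) a → GreenLeR a (vertexEl G v)) := by
  refine ⟨fun a h => ?_, fun a h => ?_⟩
  · rcases h with h | ⟨c, hc⟩
    · exact Or.inl h.symm
    · exact Or.inr ⟨a, GIS.eq_mul_vertexEl_of_vertexEl_eq_mul hc⟩
  · rcases h with h | ⟨c, hc⟩
    · exact Or.inl h.symm
    · exact Or.inr ⟨a, GIS.eq_vertexEl_mul_of_vertexEl_eq_mul hc⟩
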